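/- Let X1, X2, X3 be (joint) random variables on a finite probability space such that X3 = (g1(X1), g2(X2)) for deterministic functions g1, g2. Then for any random variable W, the conditional triple mutual information satisfies I(X1; X2; X3 | W) ≥ 0. -/

import Mathlib

open Finset

/-- Probability mass of the event `X = a` under weights `p`. -/
noncomputable def pmass {Ω α : Type} [Fintype Ω] [DecidableEq α]
    (p : Ω → ℝ) (X : Ω → α) (a : α) : ℝ :=
  ∑ ω, if X ω = a then p ω else 0

/-- Shannon entropy (base 2) of a random variable `X` on a finite space. -/
noncomputable def ent {Ω α : Type} [Fintype Ω] [Fintype α] [DecidableEq α]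
    (p : Ω → ℝ) (X : Ω → α) : ℝ :=
  ∑ a, -(pmass p X a * Real.logb 2 (pmass p X a))

/-- Conditional Shannon entropy `H(X|Y) = H(X,Y) - H(Y)`. -/
noncomputable def condEnt {Ω α β : Type} [Fintype Ω] [Fintype α] [Fintype β]
    [DecidableEq α] [DecidableEq β] (p : Ω → ℝ) (X : Ω → α) (Y : Ω → β) : ℝ :=
  ent p (fun ω => (X ω, Y ω)) - ent p Y

/-- Conditional mutual information `I(X;Y|W) = H(X|W) + H(Y|W) - H(X,Y|W)`. -/
noncomputable def condMI {Ω α β γ : Type} [Fintype Ω] [Fintype α] [Fintype β] [Fintype γ]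
    [DecidableEq α] [DecidableEq β] [DecidableEq γ]
    (p : Ω → ℝ) (X : Ω → α) (Y : Ω → β) (W : Ω → γ) : ℝ :=
  condEnt p X W + condEnt p Y W - condEnt p (fun ω => (X ω, Y ω)) W

/-- Conditional triple mutual information
`I(X;Y;Z|W) = H(X|W)+H(Y|W)+H(Z|W)-H(X,Y|W)-H(X,Z|W)-H(Y,Z|W)+H(X,Y,Z|W)`. -/
noncomputable def condTripleMI {Ω α β γ δ : Type}
    [Fintype Ω] [Fintype α] [Fintype β] [Fintype γ] [Fintype δ]
    [DecidableEq α] [DecidableEq β] [DecidableEq γ] [DecidableEq δ]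
    (p : Ω → ℝ) (X : Ω → α) (Y : Ω → β) (Z : Ω → γ) (W : Ω → δ) : ℝ :=
  condEnt p X W + condEnt p Y W + condEnt p Z W
    - condEnt p (fun ω => (X ω, Y ω)) W - condEnt p (fun ω => (X ω, Z ω)) W
    - condEnt p (fun ω => (Y ω, Z ω)) W
    + condEnt p (fun ω => (X ω, Y ω, Z ω)) W

set_option linter.unusedSectionVars false

section Helpers

lemma key_term (q a b c : ℝ) (hq : 0 ≤ q) (ha : q ≤ a) (hb : q ≤ b) (hac : a ≤ c) :
    q - a * b / c ≤ q * Real.log q + q * Real.log c - q * Real.log a - q * Real.log b := by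
  rcases eq_or_lt_of_le hq with h0 | h0
  · rw [← h0]
    have ha0 : (0:ℝ) ≤ a := le_trans hq ha
    have hb0 : (0:ℝ) ≤ b := le_trans hq hb
    have hc0 : (0:ℝ) ≤ c := le_trans ha0 hac
    have : 0 ≤ a * b / c := by positivity
    simp
    linarith
  · have ha0 : 0 < a := lt_of_lt_of_le h0 ha
    have hb0 : 0 < b := lt_of_lt_of_le h0 hb
    have hc0 : 0 < c := lt_of_lt_of_le ha0 hac
    have hlog := Real.log_le_sub_one_of_pos (x := a * b / (q * c)) (by positivity)
    have hexp : Real.log (a * b / (q * c)) = Real.log a + Real.log b - Real.log q - Real.log c := by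
      rw [Real.log_div (by positivity) (by positivity), Real.log_mul ha0.ne' hb0.ne',
        Real.log_mul h0.ne' hc0.ne']
      ring
    rw [hexp] at hlog
    have hmul := mul_le_mul_of_nonneg_left hlog hq
    have hq' : q * (a * b / (q * c)) = a * b / c := by
      field_simp
    nlinarith [hmul, hq']

lemma neg_mul_logb (t : ℝ) : -(t * Real.logb 2 t) = -(t * Real.log t) * (Real.log 2)⁻¹ := by
  rw [Real.logb]; ring

lemma expand_sum {β : Type} [Fintype β] (f : β → ℝ) (L c : ℝ) :
    -((∑ y, f y) * L) * c = ∑ y, -(f y * L) * c := by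
  rw [← Finset.sum_mul, Finset.sum_neg_distrib, ← Finset.sum_mul]

variable {α β γ : Type} [Fintype α] [Fintype β] [Fintype γ]

lemma sum_rot2 (f : α → β → γ → ℝ) : ∑ x, ∑ y, ∑ w, f x y w = ∑ y, ∑ w, ∑ x, f x y w :=
  calc ∑ x, ∑ y, ∑ w, f x y w = ∑ y, ∑ x, ∑ w, f x y w := Finset.sum_comm
    _ = ∑ y, ∑ w, ∑ x, f x y w := Finset.sum_congr rfl fun _ _ => Finset.sum_comm

lemma sum_rot (f : α → β → γ → ℝ) : ∑ x, ∑ y, ∑ w, f x y w = ∑ w, ∑ x, ∑ y, f x y w :=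
  calc ∑ x, ∑ y, ∑ w, f x y w = ∑ x, ∑ w, ∑ y, f x y w :=
        Finset.sum_congr rfl fun _ _ => Finset.sum_comm
    _ = ∑ w, ∑ x, ∑ y, f x y w := Finset.sum_comm

lemma submod (q : α → β → γ → ℝ) (hq0 : ∀ x y w, 0 ≤ q x y w)
    (hq1 : ∑ x, ∑ y, ∑ w, q x y w = 1) :
    0 ≤ (∑ x, ∑ w, -((∑ y, q x y w) * Real.logb 2 (∑ y, q x y w)))
      + (∑ y, ∑ w, -((∑ x, q x y w) * Real.logb 2 (∑ x, q x y w)))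
      - (∑ x, ∑ y, ∑ w, -(q x y w * Real.logb 2 (q x y w)))
      - (∑ w, -((∑ x, ∑ y, q x y w) * Real.logb 2 (∑ x, ∑ y, q x y w))) := by
  have hSnn : 0 ≤ ∑ x, ∑ y, ∑ w,
      (q x y w * Real.log (q x y w) + q x y w * Real.log (∑ x', ∑ y', q x' y' w)
        - q x y w * Real.log (∑ y', q x y' w) - q x y w * Real.log (∑ x', q x' y w)) := by
    have hbound : ∑ x, ∑ y, ∑ w,
        (q x y w - (∑ y', q x y' w) * (∑ x', q x' y w) / (∑ x', ∑ y', q x' y' w))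
        ≤ ∑ x, ∑ y, ∑ w,
        (q x y w * Real.log (q x y w) + q x y w * Real.log (∑ x', ∑ y', q x' y' w)
          - q x y w * Real.log (∑ y', q x y' w) - q x y w * Real.log (∑ x', q x' y w)) := by
      refine Finset.sum_le_sum fun x _ => Finset.sum_le_sum fun y _ =>
        Finset.sum_le_sum fun w _ => ?_
      refine key_term _ _ _ _ (hq0 x y w) ?_ ?_ ?_
      · exact Finset.single_le_sum (f := fun y' => q x y' w) (fun y' _ => hq0 x y' w) (mem_univ y)
      · exact Finset.single_le_sum (f := fun x' => q x' y w) (fun x' _ => hq0 x' y w) (mem_univ x)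
      · exact Finset.single_le_sum (f := fun x' => ∑ y', q x' y' w)
          (fun x' _ => Finset.sum_nonneg fun y' _ => hq0 x' y' w) (mem_univ x)
    have hmarg : ∀ w : γ, ∑ x, ∑ y, (∑ y', q x y' w) * (∑ x', q x' y w) / (∑ x', ∑ y', q x' y' w)
        = (∑ x', ∑ y', q x' y' w) * (∑ x', ∑ y', q x' y' w) / (∑ x', ∑ y', q x' y' w) := by
      intro w
      have hsy : (∑ y, ∑ x', q x' y w) = ∑ x', ∑ y', q x' y' w := Finset.sum_comm
      calc ∑ x, ∑ y, (∑ y', q x y' w) * (∑ x', q x' y w) / (∑ x', ∑ y', q x' y' w)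
          = ∑ x, ((∑ y', q x y' w) * ∑ y, ∑ x', q x' y w) / (∑ x', ∑ y', q x' y' w) := by
            refine Finset.sum_congr rfl fun x _ => ?_
            rw [Finset.mul_sum, Finset.sum_div]
        _ = ∑ x, (∑ y', q x y' w) * (∑ x', ∑ y', q x' y' w) / (∑ x', ∑ y', q x' y' w) := by
            rw [hsy]
        _ = (∑ x, ∑ y', q x y' w) * (∑ x', ∑ y', q x' y' w) / (∑ x', ∑ y', q x' y' w) := by
            rw [← Finset.sum_div, ← Finset.sum_mul]
    have hcount : ∑ x, ∑ y, ∑ w,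
        (q x y w - (∑ y', q x y' w) * (∑ x', q x' y w) / (∑ x', ∑ y', q x' y' w))
        = 1 - ∑ w, (∑ x', ∑ y', q x' y' w) * (∑ x', ∑ y', q x' y' w)
            / (∑ x', ∑ y', q x' y' w) := by
      calc ∑ x, ∑ y, ∑ w,
          (q x y w - (∑ y', q x y' w) * (∑ x', q x' y w) / (∑ x', ∑ y', q x' y' w))
          = (∑ x, ∑ y, ∑ w, q x y w) - ∑ x, ∑ y, ∑ w,
              (∑ y', q x y' w) * (∑ x', q x' y w) / (∑ x', ∑ y', q x' y' w) := by
            simp [Finset.sum_sub_distrib]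
        _ = 1 - ∑ w, ∑ x, ∑ y,
              (∑ y', q x y' w) * (∑ x', q x' y w) / (∑ x', ∑ y', q x' y' w) := by
            rw [hq1, sum_rot]
        _ = _ := by rw [Finset.sum_congr rfl fun w _ => hmarg w]
    have hR : ∑ w, (∑ x', ∑ y', q x' y' w) * (∑ x', ∑ y', q x' y' w)
        / (∑ x', ∑ y', q x' y' w) ≤ 1 := by
      have h1 : ∑ w, ∑ x', ∑ y', q x' y' w = 1 := by rw [← sum_rot q]; exact hq1
      rw [← h1]
      refine Finset.sum_le_sum fun w _ => ?_
      rcases eq_or_ne (∑ x', ∑ y', q x' y' w) 0 with h | h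
      · simp [h]
      · rw [mul_div_assoc, div_self h, mul_one]
    rw [hcount] at hbound
    linarith
  have hA : (∑ x, ∑ w, -((∑ y, q x y w) * Real.logb 2 (∑ y, q x y w)))
      = (∑ x, ∑ y, ∑ w, -(q x y w * Real.log (∑ y', q x y' w)) * (Real.log 2)⁻¹) := by
    refine Finset.sum_congr rfl fun x _ => ?_
    rw [Finset.sum_comm]
    refine Finset.sum_congr rfl fun w _ => ?_
    rw [neg_mul_logb]
    exact expand_sum (fun y => q x y w) _ _
  have hB : (∑ y, ∑ w, -((∑ x, q x y w) * Real.logb 2 (∑ x, q x y w)))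
      = (∑ x, ∑ y, ∑ w, -(q x y w * Real.log (∑ x', q x' y w)) * (Real.log 2)⁻¹) := by
    rw [sum_rot2 (fun x y w => -(q x y w * Real.log (∑ x', q x' y w)) * (Real.log 2)⁻¹)]
    refine Finset.sum_congr rfl fun y _ => ?_
    refine Finset.sum_congr rfl fun w _ => ?_
    rw [neg_mul_logb]
    exact expand_sum (fun x => q x y w) _ _
  have hC : (∑ x, ∑ y, ∑ w, -(q x y w * Real.logb 2 (q x y w)))
      = (∑ x, ∑ y, ∑ w, -(q x y w * Real.log (q x y w)) * (Real.log 2)⁻¹) := by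
    refine Finset.sum_congr rfl fun x _ => Finset.sum_congr rfl fun y _ =>
      Finset.sum_congr rfl fun w _ => neg_mul_logb _
  have hD : (∑ w, -((∑ x, ∑ y, q x y w) * Real.logb 2 (∑ x, ∑ y, q x y w)))
      = (∑ x, ∑ y, ∑ w, -(q x y w * Real.log (∑ x', ∑ y', q x' y' w)) * (Real.log 2)⁻¹) := by
    rw [sum_rot (fun x y w => -(q x y w * Real.log (∑ x', ∑ y', q x' y' w)) * (Real.log 2)⁻¹)]
    refine Finset.sum_congr rfl fun w _ => ?_
    rw [neg_mul_logb]
    have e1 := expand_sum (fun x => ∑ y, q x y w) (Real.log (∑ x', ∑ y', q x' y' w)) (Real.log 2)⁻¹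
    rw [e1]
    refine Finset.sum_congr rfl fun x _ => ?_
    exact expand_sum (fun y => q x y w) _ _
  rw [hA, hB, hC, hD]
  have hcomb : (∑ x, ∑ y, ∑ w, -(q x y w * Real.log (∑ y', q x y' w)) * (Real.log 2)⁻¹)
      + (∑ x, ∑ y, ∑ w, -(q x y w * Real.log (∑ x', q x' y w)) * (Real.log 2)⁻¹)
      - (∑ x, ∑ y, ∑ w, -(q x y w * Real.log (q x y w)) * (Real.log 2)⁻¹)
      - (∑ x, ∑ y, ∑ w, -(q x y w * Real.log (∑ x', ∑ y', q x' y' w)) * (Real.log 2)⁻¹)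
      = (∑ x, ∑ y, ∑ w,
        (q x y w * Real.log (q x y w) + q x y w * Real.log (∑ x', ∑ y', q x' y' w)
          - q x y w * Real.log (∑ y', q x y' w) - q x y w * Real.log (∑ x', q x' y w)))
        * (Real.log 2)⁻¹ := by
    simp only [Finset.sum_mul, ← Finset.sum_add_distrib, ← Finset.sum_sub_distrib]
    refine Finset.sum_congr rfl fun x _ => Finset.sum_congr rfl fun y _ =>
      Finset.sum_congr rfl fun w _ => by ring
  rw [hcomb]
  exact mul_nonneg hSnn (inv_nonneg.2 (Real.log_nonneg one_le_two))

end Helpers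

section PMass

variable {Ω α β γ : Type} [Fintype Ω] [Fintype α] [Fintype β] [Fintype γ]
  [DecidableEq α] [DecidableEq β] [DecidableEq γ]

lemma pmass_nonneg (p : Ω → ℝ) (hp0 : ∀ ω, 0 ≤ p ω) (X : Ω → α) (a : α) :
    0 ≤ pmass p X a := by
  apply Finset.sum_nonneg; intro ω _; split <;> simp [hp0 ω]

lemma pmass_comp_inj (p : Ω → ℝ) (X : Ω → α) (φ : α → β) (hφ : Function.Injective φ) (a : α) :
    pmass p (fun ω => φ (X ω)) (φ a) = pmass p X a := by
  unfold pmass; apply Finset.sum_congr rfl; intro ω _; simp [hφ.eq_iff]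

lemma ent_comp_inj (p : Ω → ℝ) (X : Ω → α) (φ : α → β) (hφ : Function.Injective φ) :
    ent p (fun ω => φ (X ω)) = ent p X := by
  unfold ent
  rw [← Finset.sum_subset (Finset.subset_univ (Finset.univ.image φ))
      (by
        intro b _ hb
        have h0 : pmass p (fun ω => φ (X ω)) b = 0 := by
          unfold pmass
          apply Finset.sum_eq_zero
          intro ω _
          have : φ (X ω) ≠ b := fun h => hb (Finset.mem_image.2 ⟨X ω, Finset.mem_univ _, h⟩)
          simp [this]
        simp [h0]),
    Finset.sum_image (fun a _ b _ h => hφ h)]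
  exact Finset.sum_congr rfl fun a _ => by rw [pmass_comp_inj p X φ hφ a]

lemma sum_pmass (p : Ω → ℝ) (X : Ω → α) : ∑ a, pmass p X a = ∑ ω, p ω := by
  unfold pmass
  rw [Finset.sum_comm]
  refine Finset.sum_congr rfl fun ω _ => ?_
  simp

lemma marg_XW (p : Ω → ℝ) (X : Ω → α) (Y : Ω → β) (W : Ω → γ) (x : α) (w : γ) :
    pmass p (fun ω => (X ω, W ω)) (x, w)
      = ∑ y, pmass p (fun ω => (X ω, Y ω, W ω)) (x, y, w) := by
  unfold pmass
  rw [Finset.sum_comm]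
  refine Finset.sum_congr rfl fun ω _ => ?_
  by_cases h1 : X ω = x <;> by_cases h2 : W ω = w <;>
    simp [Prod.ext_iff, h1, h2]

lemma marg_YW (p : Ω → ℝ) (X : Ω → α) (Y : Ω → β) (W : Ω → γ) (y : β) (w : γ) :
    pmass p (fun ω => (Y ω, W ω)) (y, w)
      = ∑ x, pmass p (fun ω => (X ω, Y ω, W ω)) (x, y, w) := by
  unfold pmass
  rw [Finset.sum_comm]
  refine Finset.sum_congr rfl fun ω _ => ?_
  by_cases h1 : Y ω = y <;> by_cases h2 : W ω = w <;>
    simp [Prod.ext_iff, h1, h2]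

lemma marg_W (p : Ω → ℝ) (X : Ω → α) (Y : Ω → β) (W : Ω → γ) (w : γ) :
    pmass p W w = ∑ x, ∑ y, pmass p (fun ω => (X ω, Y ω, W ω)) (x, y, w) := by
  have h : pmass p W w = ∑ x, pmass p (fun ω => (X ω, W ω)) (x, w) := by
    unfold pmass
    rw [Finset.sum_comm]
    refine Finset.sum_congr rfl fun ω _ => ?_
    by_cases h2 : W ω = w <;> simp [Prod.ext_iff, h2]
  rw [h]
  exact Finset.sum_congr rfl fun x _ => marg_XW p X Y W x w

lemma marg_pair (p : Ω → ℝ) (X : Ω → α) (Y : Ω → β) (W : Ω → γ) (x : α) (y : β) (w : γ) :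
    pmass p (fun ω => ((X ω, Y ω), W ω)) ((x, y), w)
      = pmass p (fun ω => (X ω, Y ω, W ω)) (x, y, w) := by
  unfold pmass
  refine Finset.sum_congr rfl fun ω _ => ?_
  simp [Prod.ext_iff, and_assoc]

lemma condMI_ent_nonneg (p : Ω → ℝ) (hp0 : ∀ ω, 0 ≤ p ω) (hp1 : ∑ ω, p ω = 1)
    (X : Ω → α) (Y : Ω → β) (W : Ω → γ) :
    0 ≤ ent p (fun ω => (X ω, W ω)) + ent p (fun ω => (Y ω, W ω))
      - ent p (fun ω => ((X ω, Y ω), W ω)) - ent p W := by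
  have e1 : ent p (fun ω => (X ω, W ω)) = ∑ x, ∑ w,
      -((∑ y, pmass p (fun ω => (X ω, Y ω, W ω)) (x, y, w))
        * Real.logb 2 (∑ y, pmass p (fun ω => (X ω, Y ω, W ω)) (x, y, w))) := by
    rw [ent, Fintype.sum_prod_type]
    exact Finset.sum_congr rfl fun x _ => Finset.sum_congr rfl fun w _ => by
      rw [marg_XW p X Y W x w]
  have e2 : ent p (fun ω => (Y ω, W ω)) = ∑ y, ∑ w,
      -((∑ x, pmass p (fun ω => (X ω, Y ω, W ω)) (x, y, w))
        * Real.logb 2 (∑ x, pmass p (fun ω => (X ω, Y ω, W ω)) (x, y, w))) := by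
    rw [ent, Fintype.sum_prod_type]
    exact Finset.sum_congr rfl fun y _ => Finset.sum_congr rfl fun w _ => by
      rw [marg_YW p X Y W y w]
  have e3 : ent p (fun ω => ((X ω, Y ω), W ω)) = ∑ x, ∑ y, ∑ w,
      -(pmass p (fun ω => (X ω, Y ω, W ω)) (x, y, w)
        * Real.logb 2 (pmass p (fun ω => (X ω, Y ω, W ω)) (x, y, w))) := by
    rw [ent, Fintype.sum_prod_type, Fintype.sum_prod_type]
    exact Finset.sum_congr rfl fun x _ => Finset.sum_congr rfl fun y _ =>
      Finset.sum_congr rfl fun w _ => by rw [marg_pair p X Y W x y w]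
  have e4 : ent p W = ∑ w,
      -((∑ x, ∑ y, pmass p (fun ω => (X ω, Y ω, W ω)) (x, y, w))
        * Real.logb 2 (∑ x, ∑ y, pmass p (fun ω => (X ω, Y ω, W ω)) (x, y, w))) := by
    rw [ent]
    exact Finset.sum_congr rfl fun w _ => by rw [marg_W p X Y W w]
  have hq1 : ∑ x, ∑ y, ∑ w, pmass p (fun ω => (X ω, Y ω, W ω)) (x, y, w) = 1 := by
    have := sum_pmass p (fun ω => (X ω, Y ω, W ω))
    rw [hp1] at this
    rw [← this, Fintype.sum_prod_type]
    exact Finset.sum_congr rfl fun x _ => by rw [Fintype.sum_prod_type]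
  rw [e1, e2, e3, e4]
  exact submod (fun x y w => pmass p (fun ω => (X ω, Y ω, W ω)) (x, y, w))
    (fun x y w => pmass_nonneg p hp0 _ _) hq1

end PMass

set_option maxHeartbeats 1000000 in
/-- if `X3 = (g1(X1), g2(X2))` then `I(X1;X2;X3|W) ≥ 0`. -/
theorem stmt_3 {Ω α β γ₁ γ₂ δ : Type}
    [Fintype Ω] [Fintype α] [Fintype β] [Fintype γ₁] [Fintype γ₂] [Fintype δ]
    [DecidableEq α] [DecidableEq β] [DecidableEq γ₁] [DecidableEq γ₂] [DecidableEq δ]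
    (p : Ω → ℝ) (hp0 : ∀ ω, 0 ≤ p ω) (hp1 : ∑ ω, p ω = 1)
    (X1 : Ω → α) (X2 : Ω → β) (X3 : Ω → γ₁ × γ₂) (W : Ω → δ)
    (g1 : α → γ₁) (g2 : β → γ₂)
    (hX3 : ∀ ω, X3 ω = (g1 (X1 ω), g2 (X2 ω))) :
    0 ≤ condTripleMI p X1 X2 X3 W := by
  have hX3' : X3 = fun ω => (g1 (X1 ω), g2 (X2 ω)) := funext hX3
  subst hX3'
  -- injective relabeling maps
  have hφ1 : Function.Injective
      (fun z : (α × γ₂) × δ => ((z.1.1, (g1 z.1.1, z.1.2)), z.2)) := by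
    intro ⟨⟨a, v⟩, w⟩ ⟨⟨a', v'⟩, w'⟩ h
    simp only [Prod.mk.injEq] at h
    simp_all
  have hφ2 : Function.Injective
      (fun z : (β × γ₁) × δ => ((z.1.1, (z.1.2, g2 z.1.1)), z.2)) := by
    intro ⟨⟨b, u⟩, w⟩ ⟨⟨b', u'⟩, w'⟩ h
    simp only [Prod.mk.injEq] at h
    simp_all
  have hφ3 : Function.Injective
      (fun z : (α × β) × δ => ((z.1.1, z.1.2, (g1 z.1.1, g2 z.1.2)), z.2)) := by
    intro ⟨⟨a, b⟩, w⟩ ⟨⟨a', b'⟩, w'⟩ h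
    simp only [Prod.mk.injEq] at h
    simp_all
  have hφ4 : Function.Injective
      (fun z : α × δ => (z.1, (g1 z.1, z.2))) := by
    intro ⟨a, w⟩ ⟨a', w'⟩ h
    simp only [Prod.mk.injEq] at h
    simp_all
  have hφ5 : Function.Injective
      (fun z : (γ₁ × γ₂) × δ => (z.1.2, (z.1.1, z.2))) := by
    intro ⟨⟨u, v⟩, w⟩ ⟨⟨u', v'⟩, w'⟩ h
    simp only [Prod.mk.injEq] at h
    simp_all
  have hφ6 : Function.Injective
      (fun z : (α × γ₂) × δ => (z.1, (g1 z.1.1, z.2))) := by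
    intro ⟨⟨a, v⟩, w⟩ ⟨⟨a', v'⟩, w'⟩ h
    simp only [Prod.mk.injEq] at h
    simp_all
  -- entropy relabeling identities
  have E1 := ent_comp_inj p (fun ω => ((X1 ω, g2 (X2 ω)), W ω))
    (fun z : (α × γ₂) × δ => ((z.1.1, (g1 z.1.1, z.1.2)), z.2)) hφ1
  have E2 := ent_comp_inj p (fun ω => ((X2 ω, g1 (X1 ω)), W ω))
    (fun z : (β × γ₁) × δ => ((z.1.1, (z.1.2, g2 z.1.1)), z.2)) hφ2
  have E3 := ent_comp_inj p (fun ω => ((X1 ω, X2 ω), W ω))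
    (fun z : (α × β) × δ => ((z.1.1, z.1.2, (g1 z.1.1, g2 z.1.2)), z.2)) hφ3
  have E4 := ent_comp_inj p (fun ω => (X1 ω, W ω))
    (fun z : α × δ => (z.1, (g1 z.1, z.2))) hφ4
  have E5 := ent_comp_inj p (fun ω => ((g1 (X1 ω), g2 (X2 ω)), W ω))
    (fun z : (γ₁ × γ₂) × δ => (z.1.2, (z.1.1, z.2))) hφ5
  have E6 := ent_comp_inj p (fun ω => ((X1 ω, g2 (X2 ω)), W ω))
    (fun z : (α × γ₂) × δ => (z.1, (g1 z.1.1, z.2))) hφ6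
  dsimp only at E1 E2 E3 E4 E5 E6
  -- two nonnegative conditional mutual informations
  have H1 := condMI_ent_nonneg p hp0 hp1 X1 (fun ω => g2 (X2 ω)) (fun ω => (g1 (X1 ω), W ω))
  have H2 := condMI_ent_nonneg p hp0 hp1 X2 (fun ω => g1 (X1 ω)) W
  simp only [condTripleMI, condEnt]
  linarith [E1, E2, E3, E4, E5, E6, H1, H2]
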